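/- Rational quasi-cluster maps compose: if σ : (𝒜,𝐬) ⇢ (𝒜',𝐬') is rational quasi-cluster with data (J̃, S') and injection ι, and σ' : (𝒜',𝐬') ⇢ (𝒜'',𝐬'') is rational quasi-cluster with data (J̃', S'') and injection ι', and if ι(J̃) ⊆ J̃', then σ' ∘ σ is rational quasi-cluster with data (J̃, S'' ∪ ι'(S' ∩ J̃')). -/

import Mathlib

open scoped BigOperators

/-- A (labeled) seed in an ambient field `K`: an index set `J`, a set of mutable (unfrozen)
vertices, cluster variables `A : J → K`, and an exchange matrix `ε` (with integer entries
in the rows and columns relevant to mutable vertices). -/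
structure Seed (K : Type*) [Field K] (J : Type*) [Fintype J] [DecidableEq J] where
  uf : Finset J
  A : J → K
  ε : J → J → ℤ

variable {K K' K'' : Type*} [Field K] [Field K'] [Field K'']
variable {J J' J'' : Type*} [Fintype J] [DecidableEq J] [Fintype J'] [DecidableEq J']
  [Fintype J''] [DecidableEq J'']

/-- The exchange ratio `X_i = ∏_j A_j^{ε_{ij}}` of a seed. -/
noncomputable def Seed.X (s : Seed K J) (i : J) : K := ∏ j, s.A j ^ s.ε i j

/-- A field embedding `σ : K → K'` is a *rational quasi-cluster map* from the seed `s` to the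
seed `s'`, with data `(J̃, ι, S')`, if: `J_uf ⊆ J̃`; `ι` is injective on `J̃` and maps `J_uf`
into `J'_uf`; `S' ⊆ J' ∖ ι(J̃)`; for `i ∈ J̃`, `σ(A_i)` equals `A'_{ι i}` times a Laurent
monomial in `{A'_j : j ∈ S'}`; for `i ∈ J_uf`, `σ(X_i) = X'_{ι i}`; and for `i ∉ J̃`,
`σ(A_i)` is a Laurent monomial in `{A'_j : j ∈ S'}`. -/
structure IsRQC (σ : K →+* K') (s : Seed K J) (s' : Seed K' J')
    (Jt : Finset J) (ι : J → J') (S' : Finset J') : Prop where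
  uf_sub : s.uf ⊆ Jt
  inj : Set.InjOn ι ↑Jt
  maps_uf : ∀ i ∈ s.uf, ι i ∈ s'.uf
  disj : ∀ j ∈ S', ∀ i ∈ Jt, ι i ≠ j
  laurent : ∀ i ∈ Jt, ∃ m : J' → ℤ,
    σ (s.A i) = s'.A (ι i) * ∏ j ∈ S', s'.A j ^ m j
  exch : ∀ i ∈ s.uf, σ (s.X i) = s'.X (ι i)
  frozen_mono : ∀ i, i ∉ Jt → ∃ m : J' → ℤ,
    σ (s.A i) = ∏ j ∈ S', s'.A j ^ m j

/-!
Write `T = ι'(S' ∩ J̃')`. Every `A'_j` with `j ∈ S'` is sent by `σ'` to a Laurent monomial in the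
`A''_l` with `l ∈ S'' ∪ T`: if `j ∈ J̃'` it goes to `A''_{ι' j}` times a monomial over `S''`,
otherwise to a monomial over `S''` alone. Hence `σ'` carries Laurent monomials over `S'` to Laurent
monomials over `S'' ∪ T`, and conditions (1) and (3) for `σ' ∘ σ` follow by applying `σ'` to
those for `σ`. The remaining conditions compose directly, and `S'' ∪ T` misses `ι'(ι(J̃))` because
`ι'` is injective on `J̃' ⊇ ι(J̃)`.
-/

section LaurentMonomials

variable {G₀ H₀ ι κ : Type*} [CommGroupWithZero G₀] [CommGroupWithZero H₀]

-- Not always `c = p + q`: `0 ^ p * 0 ^ (-p) = 0 ≠ 0 ^ 0` for `p ≠ 0`.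
theorem exists_zpow_mul_zpow_eq_zpow (a : G₀) (p q : ℤ) : ∃ c : ℤ, a ^ p * a ^ q = a ^ c := by
  by_cases h : a ≠ 0 ∨ p + q ≠ 0 ∨ p = 0 ∧ q = 0
  · exact ⟨p + q, (zpow_add' h).symm⟩
  · push Not at h
    obtain ⟨rfl, -, -⟩ := h
    by_cases hp : p = 0
    · exact ⟨q, by rw [hp, zpow_zero, one_mul]⟩
    · exact ⟨1, by rw [zero_zpow p hp, zero_mul, zpow_one]⟩

def laurentMonomials (A : ι → G₀) (T : Finset ι) : Submonoid G₀ where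
  carrier := {x | ∃ m : ι → ℤ, x = ∏ j ∈ T, A j ^ m j}
  one_mem' := ⟨0, by simp⟩
  mul_mem' := by
    rintro _ _ ⟨m, rfl⟩ ⟨n, rfl⟩
    choose c hc using fun j => exists_zpow_mul_zpow_eq_zpow (A j) (m j) (n j)
    exact ⟨c, by rw [← Finset.prod_mul_distrib]; exact Finset.prod_congr rfl fun j _ => hc j⟩

variable {A : ι → G₀} {T U : Finset ι} {x : G₀}

theorem prod_zpow_mem_laurentMonomials (m : ι → ℤ) :
    ∏ j ∈ T, A j ^ m j ∈ laurentMonomials A T :=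
  ⟨m, rfl⟩

theorem mem_laurentMonomials_of_mem [DecidableEq ι] {j : ι} (hj : j ∈ T) :
    A j ∈ laurentMonomials A T :=
  ⟨Pi.single j 1, by
    rw [Finset.prod_eq_single_of_mem j hj fun k _ hk => by rw [Pi.single_eq_of_ne hk, zpow_zero],
      Pi.single_eq_same, zpow_one]⟩

theorem laurentMonomials_mono [DecidableEq ι] (hTU : T ⊆ U) :
    laurentMonomials A T ≤ laurentMonomials A U := by
  rintro _ ⟨m, rfl⟩
  exact ⟨fun j => if j ∈ T then m j else 0, by
    rw [← Finset.prod_subset hTU fun j _ hj => by simp only [if_neg hj, zpow_zero]]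
    exact Finset.prod_congr rfl fun j hj => by simp only [if_pos hj]⟩

theorem zpow_mem_laurentMonomials (hx : x ∈ laurentMonomials A T) (e : ℤ) :
    x ^ e ∈ laurentMonomials A T := by
  obtain ⟨m, rfl⟩ := hx
  exact ⟨fun j => m j * e, by simp only [← Finset.prod_zpow, zpow_mul]⟩

theorem map_mem_laurentMonomials {F : Type*} [FunLike F G₀ H₀] [MonoidWithZeroHomClass F G₀ H₀]
    (f : F) {B : κ → H₀} {V : Finset κ} (hA : ∀ j ∈ T, f (A j) ∈ laurentMonomials B V)
    (hx : x ∈ laurentMonomials A T) : f x ∈ laurentMonomials B V := by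
  obtain ⟨m, rfl⟩ := hx
  rw [map_prod]
  exact Submonoid.prod_mem _ fun j hj => by
    rw [map_zpow₀]
    exact zpow_mem_laurentMonomials (hA j hj) _

end LaurentMonomials

namespace IsRQC

variable {σ : K →+* K'} {s : Seed K J} {s' : Seed K' J'} {Jt : Finset J} {ι : J → J'} {S' : Finset J'}

theorem exists_map_A_eq_mul (h : IsRQC σ s s' Jt ι S') {i : J} (hi : i ∈ Jt) :
    ∃ x ∈ laurentMonomials s'.A S', σ (s.A i) = s'.A (ι i) * x := by
  obtain ⟨m, hm⟩ := h.laurent i hi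
  exact ⟨_, prod_zpow_mem_laurentMonomials m, hm⟩

theorem map_A_mem_laurentMonomials (h : IsRQC σ s s' Jt ι S') {U : Finset J} {i : J}
    (hi : i ∈ U) : σ (s.A i) ∈ laurentMonomials s'.A (S' ∪ (U ∩ Jt).image ι) := by
  by_cases hiJt : i ∈ Jt
  · obtain ⟨x, hx, hAx⟩ := h.exists_map_A_eq_mul hiJt
    rw [hAx]
    exact mul_mem
      (mem_laurentMonomials_of_mem (Finset.mem_union_right _
        (Finset.mem_image_of_mem ι (Finset.mem_inter.mpr ⟨hi, hiJt⟩))))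
      (laurentMonomials_mono Finset.subset_union_left hx)
  · exact laurentMonomials_mono Finset.subset_union_left (h.frozen_mono i hiJt)

end IsRQC

theorem IsRQC.comp (σ : K →+* K') (σ' : K' →+* K'')
    (s : Seed K J) (s' : Seed K' J') (s'' : Seed K'' J'')
    (Jt : Finset J) (ι : J → J') (S' : Finset J')
    (Jt' : Finset J') (ι' : J' → J'') (S'' : Finset J'')
    (h : IsRQC σ s s' Jt ι S') (h' : IsRQC σ' s' s'' Jt' ι' S'')
    (hsub : ∀ i ∈ Jt, ι i ∈ Jt') :
    IsRQC (σ'.comp σ) s s'' Jt (ι' ∘ ι) (S'' ∪ (S' ∩ Jt').image ι') := by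
  have hmono : ∀ x ∈ laurentMonomials s'.A S',
      σ' x ∈ laurentMonomials s''.A (S'' ∪ (S' ∩ Jt').image ι') := fun x =>
    map_mem_laurentMonomials σ' fun j hj => h'.map_A_mem_laurentMonomials hj
  refine ⟨h.uf_sub, h'.inj.comp h.inj fun i hi => hsub i hi,
    fun i hi => h'.maps_uf _ (h.maps_uf i hi), ?_, fun i hi => ?_,
    fun i hi => by rw [RingHom.comp_apply, h.exch i hi, h'.exch _ (h.maps_uf i hi)]; rfl,
    fun i hi => hmono _ (h.frozen_mono i hi)⟩
  · intro j hj i hi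
    rcases Finset.mem_union.mp hj with hj | hj
    · exact h'.disj j hj (ι i) (hsub i hi)
    · obtain ⟨k, hk, rfl⟩ := Finset.mem_image.mp hj
      have hk := Finset.mem_inter.mp hk
      exact fun hik => h.disj k hk.1 i hi (h'.inj (hsub i hi) hk.2 hik)
  · obtain ⟨x, hx, hAx⟩ := h.exists_map_A_eq_mul hi
    obtain ⟨y, hy, hAy⟩ := h'.exists_map_A_eq_mul (hsub i hi)
    obtain ⟨m, hm⟩ := mul_mem (laurentMonomials_mono Finset.subset_union_left hy) (hmono x hx)
    exact ⟨m, by rw [RingHom.comp_apply, hAx, map_mul, hAy, mul_assoc, hm]; rfl⟩
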